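/- Let d ≥ 1, α ∈ (1,2), Δ = Δ(α) = 1/log₂(2/α), c₁ > 0, and let β > α(αd + 1)/(2 − α) (equivalently, αd + 1 − 2β/α < −β). Then there exists a constant C > 0 such that for every integer k ≥ 3, k^{αd} · Σ_{i=1}^{k−2} (i+1)^{−β/α} e^{(c₁/α) i^{1/Δ}} · (k−i+1)^{−β/α} e^{(c₁/α) (k−i)^{1/Δ}} ≤ C · (k+1)^{−β} · e^{c₁ k^{1/Δ}}. -/
import Mathlib
set_option maxHeartbeats 1000000

/-- `Δ(β) = 1/log₂(2/β)`. -/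
noncomputable def Delta (β : ℝ) : ℝ := 1 / Real.logb 2 (2 / β)

/-- Midpoint concavity of `x ^ θ` on `[0, ∞)` for `θ ∈ (0,1)`. -/
lemma sfp_rpow_add_le_two_mul {θ : ℝ} (hθ0 : 0 < θ) (hθ1 : θ < 1) {x y : ℝ}
    (hx : 0 ≤ x) (hy : 0 ≤ y) :
    x ^ θ + y ^ θ ≤ 2 * ((x + y) / 2) ^ θ := by
  have h := (Real.concaveOn_rpow hθ0.le hθ1.le).2 (Set.mem_Ici.2 hx) (Set.mem_Ici.2 hy)
      (by norm_num : (0:ℝ) ≤ 1/2) (by norm_num : (0:ℝ) ≤ 1/2) (by norm_num)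
  simp only [smul_eq_mul] at h
  have hmid : (1/2 : ℝ) * x + (1/2 : ℝ) * y = (x + y) / 2 := by ring
  rw [hmid] at h
  linarith

/-- **The key sum bound in the inductive step** (inequality (3) of the paper).
For `d ≥ 1`, `α ∈ (1,2)`, `Δ = Δ(α)`, `c₁ > 0` and `β > α(αd+1)/(2-α)`, there is a
constant `C > 0` such that for all integers `k ≥ 3`,
`k^{αd} Σ_{i=1}^{k-2} (i+1)^{-β/α} e^{(c₁/α) i^{1/Δ}} (k-i+1)^{-β/α} e^{(c₁/α)(k-i)^{1/Δ}}
  ≤ C (k+1)^{-β} e^{c₁ k^{1/Δ}}`. -/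
theorem sfp_internal_edge_sum_bound
    (d : ℕ) (hd : 1 ≤ d) (α c₁ β : ℝ)
    (hα1 : 1 < α) (hα2 : α < 2) (hc₁ : 0 < c₁)
    (hβ : α * (α * d + 1) / (2 - α) < β) :
    ∃ C : ℝ, 0 < C ∧ ∀ k : ℕ, 3 ≤ k →
      (k : ℝ) ^ (α * d) *
          ∑ i ∈ Finset.Icc 1 (k - 2),
            ((i : ℝ) + 1) ^ (-(β / α)) * Real.exp (c₁ / α * (i : ℝ) ^ (1 / Delta α))
              * (((k - i : ℕ) : ℝ) + 1) ^ (-(β / α))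
              * Real.exp (c₁ / α * ((k - i : ℕ) : ℝ) ^ (1 / Delta α))
        ≤ C * ((k : ℝ) + 1) ^ (-β) * Real.exp (c₁ * (k : ℝ) ^ (1 / Delta α)) := by
  have hα0 : 0 < α := by linarith
  have h2mα : 0 < 2 - α := by linarith
  have hd0 : (0:ℝ) ≤ (d : ℝ) := Nat.cast_nonneg d
  have h2α : 1 < 2 / α := (one_lt_div hα0).2 hα2
  have h2α2 : 2 / α < 2 := by
    rw [div_lt_iff₀ hα0]; nlinarith
  obtain ⟨θ, hθdef⟩ : ∃ θ : ℝ, θ = Real.logb 2 (2 / α) := ⟨_, rfl⟩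
  have hθ0 : 0 < θ := hθdef ▸ Real.logb_pos one_lt_two h2α
  have hθ1 : θ < 1 := by
    rw [hθdef]
    have h := Real.logb_lt_logb (by norm_num : (1:ℝ) < 2) (by positivity) h2α2
    simpa using h
  have h2θ : (2:ℝ) ^ θ = 2 / α := by
    rw [hθdef]; exact Real.rpow_logb two_pos (by norm_num) (by positivity)
  have hDelta : 1 / Delta α = θ := by
    rw [Delta, one_div_one_div, hθdef]
  have hβ0 : 0 < β := by
    refine lt_trans ?_ hβ
    have h1 : 0 < α * (α * d + 1) := by nlinarith [mul_nonneg (mul_nonneg hα0.le hα0.le) hd0]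
    positivity
  -- key exponent inequality : αd + 1 + β < 2β/α
  have hβ' : α * (α * d + 1) < β * (2 - α) := (div_lt_iff₀ h2mα).1 hβ
  have hkeyα : (α * d + 1 + β) * α < 2 * β := by nlinarith
  have hkey : α * d + 1 + β < 2 * (β / α) := by
    rw [mul_div_assoc' 2 β α, lt_div_iff₀ hα0]; linarith
  have hp0 : 0 ≤ β / α := by positivity
  -- the constants
  obtain ⟨ε, hεdef⟩ : ∃ ε : ℝ, ε = ((α - 1) / 2) ^ (1/θ) := ⟨_, rfl⟩
  have hε0 : 0 < ε := by
    rw [hεdef]; exact Real.rpow_pos_of_pos (by linarith) _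
  have hεθ : ε ^ θ = (α - 1) / 2 := by
    rw [hεdef, one_div]
    exact Real.rpow_inv_rpow (by linarith) hθ0.ne'
  obtain ⟨δ, hδdef⟩ : ∃ δ : ℝ, δ = c₁ * (α - 1) / (2 * α) := ⟨_, rfl⟩
  have hδ0 : 0 < δ := by
    rw [hδdef]; apply div_pos (by nlinarith) (by linarith)
  obtain ⟨a, hadef⟩ : ∃ a : ℝ, a = α * d + 1 + β := ⟨_, rfl⟩
  have ha0 : 0 < a := by
    have := mul_nonneg hα0.le hd0
    rw [hadef]; linarith
  have hkeya : a < 2 * (β / α) := by rw [hadef]; exact hkey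
  obtain ⟨n, hndef⟩ : ∃ n : ℕ, n = ⌈a / θ⌉₊ := ⟨_, rfl⟩
  have han : a ≤ θ * n := by
    have h := Nat.le_ceil (a / θ)
    rw [← hndef, div_le_iff₀ hθ0] at h
    linarith
  have hn0 : (0:ℝ) < (Nat.factorial n : ℝ) := by exact_mod_cast Nat.factorial_pos n
  have hC0 : 0 < 2 ^ β * ((Nat.factorial n : ℝ) / δ ^ n + ε ^ (-(2 * (β / α)))) := by
    apply mul_pos (Real.rpow_pos_of_pos two_pos _)
    apply add_pos (div_pos hn0 (pow_pos hδ0 n))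
    exact Real.rpow_pos_of_pos hε0 _
  refine ⟨2 ^ β * ((Nat.factorial n : ℝ) / δ ^ n + ε ^ (-(2 * (β / α)))), hC0, ?_⟩
  intro k hk3
  simp only [hDelta]
  obtain ⟨K, hKdef⟩ : ∃ K : ℝ, K = (k : ℝ) := ⟨_, rfl⟩
  rw [← hKdef]
  have hK3 : (3:ℝ) ≤ K := by rw [hKdef]; exact_mod_cast hk3
  have hK1 : (1:ℝ) ≤ K := by linarith
  have hK0 : (0:ℝ) < K := by linarith
  have hKθ0 : 0 < K ^ θ := Real.rpow_pos_of_pos hK0 _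
  obtain ⟨e1, he1def⟩ : ∃ e1 : ℝ, e1 = Real.exp (-(δ * K ^ θ)) := ⟨_, rfl⟩
  obtain ⟨e2, he2def⟩ : ∃ e2 : ℝ, e2 = ε ^ (-(2 * (β / α))) * K ^ (-(2 * (β / α))) := ⟨_, rfl⟩
  have he10 : 0 < e1 := by rw [he1def]; exact Real.exp_pos _
  have he20 : 0 < e2 := by
    rw [he2def]
    exact mul_pos (Real.rpow_pos_of_pos hε0 _) (Real.rpow_pos_of_pos hK0 _)
  obtain ⟨B, hBdef⟩ : ∃ B : ℝ, B = Real.exp (c₁ * K ^ θ) * (e1 + e2) := ⟨_, rfl⟩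
  have hB0 : 0 ≤ B := by
    rw [hBdef]; exact mul_nonneg (Real.exp_pos _).le (by linarith)
  -- the per-term bound
  have key : ∀ x y : ℝ, 1 ≤ x → 1 ≤ y → x + y = K →
      (x + 1) ^ (-(β / α)) * Real.exp (c₁ / α * x ^ θ)
        * ((y + 1) ^ (-(β / α)) * Real.exp (c₁ / α * y ^ θ)) ≤ B := by
    intro x y hx1 hy1 hxy
    have hx0 : (0:ℝ) ≤ x := by linarith
    have hy0 : (0:ℝ) ≤ y := by linarith
    have hxK : x ≤ K := by linarith
    have hyK : y ≤ K := by linarith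
    -- concavity bound
    have hαK : x ^ θ + y ^ θ ≤ α * K ^ θ := by
      have h := sfp_rpow_add_le_two_mul hθ0 hθ1 hx0 hy0
      rw [hxy] at h
      have hhalf : (K / 2) ^ θ = K ^ θ * (α / 2) := by
        rw [Real.div_rpow hK0.le (by norm_num : (0:ℝ) ≤ 2), h2θ, div_div_eq_mul_div]
        ring
      rw [hhalf] at h
      linarith
    have hrw : (x + 1) ^ (-(β / α)) * Real.exp (c₁ / α * x ^ θ)
        * ((y + 1) ^ (-(β / α)) * Real.exp (c₁ / α * y ^ θ))
        = (x + 1) ^ (-(β / α)) * (y + 1) ^ (-(β / α))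
          * Real.exp (c₁ / α * x ^ θ + c₁ / α * y ^ θ) := by
      rw [Real.exp_add]; ring
    rw [hrw]
    -- small/large case
    have hsmall : ∀ u v : ℝ, 0 ≤ u → u ≤ ε * K → 0 ≤ v → v ≤ K →
        c₁ / α * u ^ θ + c₁ / α * v ^ θ ≤ c₁ * K ^ θ - δ * K ^ θ := by
      intro u v hu0 huε hv0 hvK
      have huθ : u ^ θ ≤ ε ^ θ * K ^ θ := by
        calc u ^ θ ≤ (ε * K) ^ θ := Real.rpow_le_rpow hu0 huε hθ0.le
          _ = ε ^ θ * K ^ θ := Real.mul_rpow hε0.le hK0.le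
      have hvθ : v ^ θ ≤ K ^ θ := Real.rpow_le_rpow hv0 hvK hθ0.le
      have hsum : u ^ θ + v ^ θ ≤ ((α - 1) / 2 + 1) * K ^ θ := by
        rw [hεθ] at huθ; linarith
      have hca : 0 < c₁ / α := by positivity
      have hmul := mul_le_mul_of_nonneg_left hsum hca.le
      have hid : c₁ / α * (((α - 1) / 2 + 1) * K ^ θ) = c₁ * K ^ θ - δ * K ^ θ := by
        rw [hδdef]; field_simp; ring
      rw [hid] at hmul
      linarith
    rcases le_or_gt x (ε * K) with hc | hcx
    · -- x small
      have hE : c₁ / α * x ^ θ + c₁ / α * y ^ θ ≤ c₁ * K ^ θ - δ * K ^ θ :=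
        hsmall x y hx0 hc hy0 hyK
      have hA : (x + 1) ^ (-(β / α)) ≤ 1 :=
        Real.rpow_le_one_of_one_le_of_nonpos (by linarith) (by simp [hp0])
      have hBp : (y + 1) ^ (-(β / α)) ≤ 1 :=
        Real.rpow_le_one_of_one_le_of_nonpos (by linarith) (by simp [hp0])
      have hA0 : (0:ℝ) ≤ (x + 1) ^ (-(β / α)) := Real.rpow_nonneg (by linarith) _
      have hBp0 : (0:ℝ) ≤ (y + 1) ^ (-(β / α)) := Real.rpow_nonneg (by linarith) _
      calc (x + 1) ^ (-(β / α)) * (y + 1) ^ (-(β / α))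
            * Real.exp (c₁ / α * x ^ θ + c₁ / α * y ^ θ)
          ≤ 1 * 1 * Real.exp (c₁ * K ^ θ - δ * K ^ θ) := by
            apply mul_le_mul (mul_le_mul hA hBp hBp0 (by norm_num)) (Real.exp_le_exp.2 hE)
              (Real.exp_pos _).le (by norm_num)
        _ = Real.exp (c₁ * K ^ θ) * e1 := by
            rw [he1def, ← Real.exp_add, sub_eq_add_neg, one_mul, one_mul]
        _ ≤ B := by
            rw [hBdef]
            exact mul_le_mul_of_nonneg_left (by linarith) (Real.exp_pos _).le
    rcases le_or_gt y (ε * K) with hc | hcy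
    · -- y small
      have hE : c₁ / α * x ^ θ + c₁ / α * y ^ θ ≤ c₁ * K ^ θ - δ * K ^ θ := by
        have := hsmall y x hy0 hc hx0 hxK
        linarith
      have hA : (x + 1) ^ (-(β / α)) ≤ 1 :=
        Real.rpow_le_one_of_one_le_of_nonpos (by linarith) (by simp [hp0])
      have hBp : (y + 1) ^ (-(β / α)) ≤ 1 :=
        Real.rpow_le_one_of_one_le_of_nonpos (by linarith) (by simp [hp0])
      have hA0 : (0:ℝ) ≤ (x + 1) ^ (-(β / α)) := Real.rpow_nonneg (by linarith) _
      have hBp0 : (0:ℝ) ≤ (y + 1) ^ (-(β / α)) := Real.rpow_nonneg (by linarith) _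
      calc (x + 1) ^ (-(β / α)) * (y + 1) ^ (-(β / α))
            * Real.exp (c₁ / α * x ^ θ + c₁ / α * y ^ θ)
          ≤ 1 * 1 * Real.exp (c₁ * K ^ θ - δ * K ^ θ) := by
            apply mul_le_mul (mul_le_mul hA hBp hBp0 (by norm_num)) (Real.exp_le_exp.2 hE)
              (Real.exp_pos _).le (by norm_num)
        _ = Real.exp (c₁ * K ^ θ) * e1 := by
            rw [he1def, ← Real.exp_add, sub_eq_add_neg, one_mul, one_mul]
        _ ≤ B := by
            rw [hBdef]
            exact mul_le_mul_of_nonneg_left (by linarith) (Real.exp_pos _).le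
    · -- both large
      have hεK : 0 < ε * K := mul_pos hε0 hK0
      have hAnti : ∀ u : ℝ, ε * K ≤ u → (u + 1) ^ (-(β / α)) ≤ (ε * K) ^ (-(β / α)) := by
        intro u hu
        rw [Real.rpow_neg hεK.le, Real.rpow_neg (by linarith)]
        apply inv_anti₀ (Real.rpow_pos_of_pos hεK _)
        exact Real.rpow_le_rpow hεK.le (by linarith) hp0
      have hA := hAnti x hcx.le
      have hBp := hAnti y hcy.le
      have hE : c₁ / α * x ^ θ + c₁ / α * y ^ θ ≤ c₁ * K ^ θ := by
        have hca : 0 < c₁ / α := by positivity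
        have hmul := mul_le_mul_of_nonneg_left hαK hca.le
        have hid : c₁ / α * (α * K ^ θ) = c₁ * K ^ θ := by
          field_simp
        rw [hid] at hmul
        linarith
      have hA0 : (0:ℝ) ≤ (x + 1) ^ (-(β / α)) := Real.rpow_nonneg (by linarith) _
      have hBp0 : (0:ℝ) ≤ (y + 1) ^ (-(β / α)) := Real.rpow_nonneg (by linarith) _
      calc (x + 1) ^ (-(β / α)) * (y + 1) ^ (-(β / α))
            * Real.exp (c₁ / α * x ^ θ + c₁ / α * y ^ θ)
          ≤ (ε * K) ^ (-(β / α)) * (ε * K) ^ (-(β / α)) * Real.exp (c₁ * K ^ θ) := by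
            apply mul_le_mul (mul_le_mul hA hBp hBp0 (Real.rpow_nonneg hεK.le _))
              (Real.exp_le_exp.2 hE) (Real.exp_pos _).le
            exact mul_nonneg (Real.rpow_nonneg hεK.le _) (Real.rpow_nonneg hεK.le _)
        _ = Real.exp (c₁ * K ^ θ) * e2 := by
            rw [← Real.rpow_add hεK, he2def, ← Real.mul_rpow hε0.le hK0.le,
              show -(β / α) + -(β / α) = -(2 * (β / α)) by ring]
            ring
        _ ≤ B := by
            rw [hBdef]
            exact mul_le_mul_of_nonneg_left (by linarith) (Real.exp_pos _).le
  -- bound each term of the sum by B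
  have hterm : ∀ i ∈ Finset.Icc 1 (k - 2),
      ((i : ℝ) + 1) ^ (-(β / α)) * Real.exp (c₁ / α * (i : ℝ) ^ θ)
        * (((k - i : ℕ) : ℝ) + 1) ^ (-(β / α))
        * Real.exp (c₁ / α * ((k - i : ℕ) : ℝ) ^ θ) ≤ B := by
    intro i hi
    rw [Finset.mem_Icc] at hi
    obtain ⟨hi1, hi2⟩ := hi
    have hik : i ≤ k := le_trans hi2 (Nat.sub_le _ _)
    have h2ki : 2 ≤ k - i := by omega
    have hx1 : (1:ℝ) ≤ (i : ℝ) := by exact_mod_cast hi1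
    have hy1 : (1:ℝ) ≤ ((k - i : ℕ) : ℝ) := by exact_mod_cast le_trans (by norm_num) h2ki
    have hxy : (i : ℝ) + ((k - i : ℕ) : ℝ) = K := by
      rw [hKdef, Nat.cast_sub hik]; ring
    have h := key (i : ℝ) ((k - i : ℕ) : ℝ) hx1 hy1 hxy
    calc ((i : ℝ) + 1) ^ (-(β / α)) * Real.exp (c₁ / α * (i : ℝ) ^ θ)
          * (((k - i : ℕ) : ℝ) + 1) ^ (-(β / α))
          * Real.exp (c₁ / α * ((k - i : ℕ) : ℝ) ^ θ)
        = ((i : ℝ) + 1) ^ (-(β / α)) * Real.exp (c₁ / α * (i : ℝ) ^ θ)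
          * ((((k - i : ℕ) : ℝ) + 1) ^ (-(β / α))
            * Real.exp (c₁ / α * ((k - i : ℕ) : ℝ) ^ θ)) := by ring
      _ ≤ B := h
  have hsum : (∑ i ∈ Finset.Icc 1 (k - 2),
      ((i : ℝ) + 1) ^ (-(β / α)) * Real.exp (c₁ / α * (i : ℝ) ^ θ)
        * (((k - i : ℕ) : ℝ) + 1) ^ (-(β / α))
        * Real.exp (c₁ / α * ((k - i : ℕ) : ℝ) ^ θ)) ≤ K * B := by
    calc (∑ i ∈ Finset.Icc 1 (k - 2),
        ((i : ℝ) + 1) ^ (-(β / α)) * Real.exp (c₁ / α * (i : ℝ) ^ θ)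
          * (((k - i : ℕ) : ℝ) + 1) ^ (-(β / α))
          * Real.exp (c₁ / α * ((k - i : ℕ) : ℝ) ^ θ))
        ≤ (Finset.Icc 1 (k - 2)).card • B := Finset.sum_le_card_nsmul _ _ B hterm
      _ = ((Finset.Icc 1 (k - 2)).card : ℝ) * B := by rw [nsmul_eq_mul]
      _ ≤ K * B := by
          apply mul_le_mul_of_nonneg_right ?_ hB0
          rw [Nat.card_Icc, hKdef]
          exact_mod_cast Nat.le_of_lt_succ (by omega : k - 2 + 1 - 1 < k + 1)
  -- assemble the final inequality
  have hKa0 : (0:ℝ) ≤ K ^ (α * d) := Real.rpow_nonneg hK0.le _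
  have hstep1 : K ^ (α * d) * (∑ i ∈ Finset.Icc 1 (k - 2),
      ((i : ℝ) + 1) ^ (-(β / α)) * Real.exp (c₁ / α * (i : ℝ) ^ θ)
        * (((k - i : ℕ) : ℝ) + 1) ^ (-(β / α))
        * Real.exp (c₁ / α * ((k - i : ℕ) : ℝ) ^ θ))
      ≤ K ^ (α * d) * (K * B) := mul_le_mul_of_nonneg_left hsum hKa0
  refine le_trans hstep1 ?_
  -- it remains : K^{αd} * K * B ≤ C (K+1)^{-β} exp(c₁ K^θ)
  have hQ : K ^ (α * d) * K * (e1 + e2) * (K + 1) ^ β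
      ≤ 2 ^ β * ((Nat.factorial n : ℝ) / δ ^ n + ε ^ (-(2 * (β / α)))) := by
    have h1 : (K + 1) ^ β ≤ 2 ^ β * K ^ β := by
      calc (K + 1) ^ β ≤ (2 * K) ^ β := Real.rpow_le_rpow (by linarith) (by linarith) hβ0.le
        _ = 2 ^ β * K ^ β := Real.mul_rpow (by norm_num) hK0.le
    have h2 : K ^ a = K ^ (α * d) * K * K ^ β := by
      rw [hadef, Real.rpow_add hK0, Real.rpow_add hK0, Real.rpow_one]
    have h3 : K ^ a * e1 ≤ (Nat.factorial n : ℝ) / δ ^ n := by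
      have hexp : (δ * K ^ θ) ^ n / (Nat.factorial n : ℝ) ≤ Real.exp (δ * K ^ θ) :=
        Real.pow_div_factorial_le_exp _ (mul_pos hδ0 hKθ0).le n
      have hpown : 0 < (δ * K ^ θ) ^ n / (Nat.factorial n : ℝ) :=
        div_pos (pow_pos (mul_pos hδ0 hKθ0) n) hn0
      have he1le : e1 ≤ (Nat.factorial n : ℝ) / (δ * K ^ θ) ^ n := by
        rw [he1def, Real.exp_neg]
        calc (Real.exp (δ * K ^ θ))⁻¹ ≤ ((δ * K ^ θ) ^ n / (Nat.factorial n : ℝ))⁻¹ :=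
              inv_anti₀ hpown hexp
          _ = (Nat.factorial n : ℝ) / (δ * K ^ θ) ^ n := by rw [inv_div]
      have hKan : K ^ a ≤ (K ^ θ) ^ n := by
        calc K ^ a ≤ K ^ (θ * n) := Real.rpow_le_rpow_of_exponent_le hK1 han
          _ = (K ^ θ) ^ (n : ℝ) := by rw [Real.rpow_mul hK0.le, Real.rpow_natCast]
          _ = (K ^ θ) ^ n := Real.rpow_natCast _ n
      have hδn : (δ : ℝ) ^ n ≠ 0 := (pow_pos hδ0 n).ne'
      have hKθn : (K ^ θ) ^ n ≠ 0 := (pow_pos hKθ0 n).ne'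
      calc K ^ a * e1 ≤ (K ^ θ) ^ n * ((Nat.factorial n : ℝ) / (δ * K ^ θ) ^ n) := by
            apply mul_le_mul hKan he1le he10.le (pow_nonneg hKθ0.le n)
        _ = (Nat.factorial n : ℝ) / δ ^ n := by
            rw [mul_pow]
            field_simp
    have h4 : K ^ a * e2 ≤ ε ^ (-(2 * (β / α))) := by
      rw [he2def]
      have hre : K ^ a * (ε ^ (-(2 * (β / α))) * K ^ (-(2 * (β / α))))
          = ε ^ (-(2 * (β / α))) * K ^ (a + -(2 * (β / α))) := by
        rw [Real.rpow_add hK0]; ring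
      rw [hre]
      have hle1 : K ^ (a + -(2 * (β / α))) ≤ 1 :=
        Real.rpow_le_one_of_one_le_of_nonpos hK1 (by linarith)
      calc ε ^ (-(2 * (β / α))) * K ^ (a + -(2 * (β / α)))
          ≤ ε ^ (-(2 * (β / α))) * 1 :=
            mul_le_mul_of_nonneg_left hle1 (Real.rpow_nonneg hε0.le _)
        _ = ε ^ (-(2 * (β / α))) := by ring
    calc K ^ (α * d) * K * (e1 + e2) * (K + 1) ^ β
        ≤ K ^ (α * d) * K * (e1 + e2) * (2 ^ β * K ^ β) := by
          exact mul_le_mul_of_nonneg_left h1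
            (mul_nonneg (mul_nonneg hKa0 hK0.le) (by linarith))
      _ = 2 ^ β * (K ^ (α * d) * K * K ^ β * e1 + K ^ (α * d) * K * K ^ β * e2) := by ring
      _ = 2 ^ β * (K ^ a * e1 + K ^ a * e2) := by rw [← h2]
      _ ≤ 2 ^ β * ((Nat.factorial n : ℝ) / δ ^ n + ε ^ (-(2 * (β / α)))) := by
          apply mul_le_mul_of_nonneg_left (by linarith) (by positivity)
  -- convert hQ into the required form
  have hKp1 : (0:ℝ) < K + 1 := by linarith
  have hKp1β : (0:ℝ) < (K + 1) ^ β := Real.rpow_pos_of_pos hKp1 _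
  have hP : K ^ (α * d) * K * (e1 + e2)
      ≤ 2 ^ β * ((Nat.factorial n : ℝ) / δ ^ n + ε ^ (-(2 * (β / α)))) * (K + 1) ^ (-β) := by
    rw [Real.rpow_neg hKp1.le,
      mul_comm (2 ^ β * ((Nat.factorial n : ℝ) / δ ^ n + ε ^ (-(2 * (β / α)))))
        ((K + 1) ^ β)⁻¹, ← div_eq_inv_mul, le_div_iff₀ hKp1β]
    exact hQ
  calc K ^ (α * d) * (K * B)
      = K ^ (α * d) * K * (e1 + e2) * Real.exp (c₁ * K ^ θ) := by rw [hBdef]; ring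
    _ ≤ 2 ^ β * ((Nat.factorial n : ℝ) / δ ^ n + ε ^ (-(2 * (β / α)))) * (K + 1) ^ (-β)
          * Real.exp (c₁ * K ^ θ) :=
        mul_le_mul_of_nonneg_right hP (Real.exp_pos _).le
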